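/- Let (A, (f,g)) be a conservative dibaric algebra. Define the plenary powers x^[1] = x² and x^[k+1] = (x^[k])² for k ≥ 1. Then for every k ≥ 1 and every x ∈ A, x^[k] = f(x)^{2^k − 2} · x². -/

import Mathlib

/-!
Invariance of `F` applied to the pair `(x, x)` gives `F (x²) = f(x) F(x)`, so `x² - f(x) x` is
killed by every `f`-invariant form. Conservativity puts it in the annihilator, which turns
squaring of `x²` into multiplication by `f(x)²`; the formula follows by induction on `k`.
-/

theorem apply_mul_self_sub_smul_eq_zero {K M : Type*} [Field K] [NeZero (2 : K)]
    [AddCommGroup M] [Module K M] (mul : M →ₗ[K] M →ₗ[K] M) (f F : M →ₗ[K] K)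
    (hF : ∀ a b : M, F (mul a b) = (f a * F b + f b * F a) / 2) (x : M) :
    F (mul x x - f x • x) = 0 := by
  rw [map_sub, map_smul, hF, add_self_div_two, smul_eq_mul, sub_self]

section Commutative

variable {R M : Type*} [CommRing R] [AddCommGroup M] [Module R M]
  (mul : M →ₗ[R] M →ₗ[R] M)

theorem mul_mul_self_mul_self_eq_sq_smul (hcomm : ∀ a b : M, mul a b = mul b a) {x : M} {c : R}
    (hann : ∀ t : M, mul (mul x x - c • x) t = 0) :
    mul (mul x x) (mul x x) = c ^ 2 • mul x x := by
  have hsq : ∀ t : M, mul (mul x x) t = c • mul x t := fun t => by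
    simpa only [map_sub, map_smul, LinearMap.sub_apply, LinearMap.smul_apply, sub_eq_zero]
      using hann t
  calc mul (mul x x) (mul x x) = c • mul (mul x x) x := by rw [hsq, hcomm x]
    _ = c ^ 2 • mul x x := by rw [hsq, smul_smul, sq]

theorem iterated_squares_eq_pow_smul {y : M} {c : R} (hy : mul y y = c ^ 2 • y)
    (p : ℕ → M) (hp1 : p 1 = y) (hpsucc : ∀ k : ℕ, 1 ≤ k → p (k + 1) = mul (p k) (p k)) :
    ∀ k : ℕ, 1 ≤ k → p k = c ^ (2 ^ k - 2) • y := by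
  intro k hk
  induction k, hk using Nat.le_induction with
  | base => simpa using hp1
  | succ k hk ih =>
    have hexp : 2 ^ (k + 1) - 2 = (2 ^ k - 2) + (2 ^ k - 2) + 2 := by
      have : 2 ≤ 2 ^ k := Nat.le_self_pow (by omega) 2
      rw [pow_succ]
      omega
    rw [hpsucc k hk, ih, map_smul, map_smul, LinearMap.smul_apply, hy, hexp, pow_add, pow_add,
      mul_smul, mul_smul]

end Commutative

theorem stmt_8 (A : Type*) [AddCommGroup A] [Module ℝ A]
    (mul : A →ₗ[ℝ] A →ₗ[ℝ] A)
    (hcomm : ∀ x y : A, mul x y = mul y x)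
    (f : A →ₗ[ℝ] ℝ)
    (hcons : {z : A | ∀ F : A →ₗ[ℝ] ℝ,
        (∀ a b : A, F (mul a b) = (f a * F b + f b * F a) / 2) → F z = 0}
      = {z : A | ∀ t : A, mul z t = 0})
    (x : A) (p : ℕ → A)
    (hp1 : p 1 = mul x x)
    (hpsucc : ∀ k : ℕ, 1 ≤ k → p (k + 1) = mul (p k) (p k)) :
    ∀ k : ℕ, 1 ≤ k → p k = (f x ^ (2 ^ k - 2)) • mul x x := by
  have hann : mul x x - f x • x ∈ {z : A | ∀ t : A, mul z t = 0} := by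
    rw [← hcons]
    exact fun F hF => apply_mul_self_sub_smul_eq_zero mul f F hF x
  exact iterated_squares_eq_pow_smul mul
    (mul_mul_self_mul_self_eq_sq_smul mul hcomm hann) p hp1 hpsucc
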